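/- Main error bound (ℓ₂-term): Assume ‖Φ̃ᵀ(Φ̃x* − ỹ)‖∞ ≤ λΔ/2, let x̂ solve the constrained LASSO min (1/2)‖Φ̃x − ỹ‖² + λΔ‖x‖₁ subject to ‖Φ̃x − ỹ‖∞ ≤ Δ/2 and affine saturation constraints satisfied by x*, and set h = x̂ − x*. For integers s, l and any T₀ with |T₀| = s, if A₀(Φ̃) > 0, then ‖h‖₂ ≤ 6C₂(Φ̃)²√s λΔ/√(1+9s/l) + (C₁(Φ̃)/√l)‖x*_{T₀ᶜ}‖₁ + 2.5 C₂(Φ̃)·sqrt(λΔ‖x*_{T₀ᶜ}‖₁). -/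

import Mathlib

def restrict {N : ℕ} (T : Finset (Fin N)) (h : Fin N → ℝ) : Fin N → ℝ :=
  fun i => if i ∈ T then h i else 0

def l2sq {m : ℕ} (v : Fin m → ℝ) : ℝ := ∑ i, v i ^ 2
noncomputable def l2Norm {m : ℕ} (v : Fin m → ℝ) : ℝ := Real.sqrt (∑ i, v i ^ 2)
def l1Norm {N : ℕ} (v : Fin N → ℝ) : ℝ := ∑ i, |v i|
noncomputable def linfNorm {m : ℕ} (v : Fin m → ℝ) : ℝ := ⨆ i, |v i|

noncomputable def rhoMinus {m N : ℕ} (k : ℕ) (Ψ : Matrix (Fin m) (Fin N) ℝ) : ℝ :=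
  sInf {r | ∃ (T : Finset (Fin N)) (h : Fin N → ℝ), T.card ≤ k ∧ restrict T h ≠ 0 ∧
    r = l2sq (Ψ.mulVec (restrict T h)) / l2sq (restrict T h)}

noncomputable def rhoPlus {m N : ℕ} (k : ℕ) (Ψ : Matrix (Fin m) (Fin N) ℝ) : ℝ :=
  sSup {r | ∃ (T : Finset (Fin N)) (h : Fin N → ℝ), T.card ≤ k ∧ restrict T h ≠ 0 ∧
    r = l2sq (Ψ.mulVec (restrict T h)) / l2sq (restrict T h)}

noncomputable def A0 {m N : ℕ} (s l : ℕ) (Ψ : Matrix (Fin m) (Fin N) ℝ) : ℝ :=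
  rhoMinus (s + l) Ψ - 3 * Real.sqrt ((s : ℝ) / l) * (rhoPlus (s + 2 * l) Ψ - rhoMinus (s + 2 * l) Ψ)

noncomputable def A1 {m N : ℕ} (s l : ℕ) (Ψ : Matrix (Fin m) (Fin N) ℝ) : ℝ :=
  4 * (rhoPlus (s + 2 * l) Ψ - rhoMinus (s + 2 * l) Ψ)

noncomputable def C1 {m N : ℕ} (s l : ℕ) (Ψ : Matrix (Fin m) (Fin N) ℝ) : ℝ :=
  4 + Real.sqrt (1 + 9 * (s : ℝ) / l) * A1 s l Ψ / A0 s l Ψ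

noncomputable def C2 {m N : ℕ} (s l : ℕ) (Ψ : Matrix (Fin m) (Fin N) ℝ) : ℝ :=
  Real.sqrt ((1 + 9 * (s : ℝ) / l) / A0 s l Ψ)

noncomputable def lassoObj {Mt N : ℕ} (Φ : Matrix (Fin Mt) (Fin N) ℝ) (y : Fin Mt → ℝ)
    (lam Δ : ℝ) (x : Fin N → ℝ) : ℝ :=
  (1 / 2) * l2sq (Φ.mulVec x - y) + lam * Δ * l1Norm x

/-- Feasible set: ℓ∞ quantization constraint plus affine saturation constraints. -/
def feasible {Mt Mb N : ℕ} (Φt : Matrix (Fin Mt) (Fin N) ℝ) (yt : Fin Mt → ℝ)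
    (Φb : Matrix (Fin Mb) (Fin N) ℝ) (yb : Fin Mb → ℝ) (Δ : ℝ) : Set (Fin N → ℝ) :=
  {x | (∀ i, |(Φt.mulVec x - yt) i| ≤ Δ / 2) ∧ ∀ i, yb i ≤ Φb.mulVec x i}

/-!
Write `h = xhat - xstar`, `A = T₀ ∪ T₁` and `U = ‖h_A‖₂`. Comparing the objective at `xhat` and
`xstar`, with the dual bound controlling the linear term, puts `h` in the cone
`‖h_{T₀ᶜ}‖₁ ≤ 3‖h_{T₀}‖₁ + 4‖xstar_{T₀ᶜ}‖₁` and bounds `‖Φh‖²` above by a linear function of `U`.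
Cutting `Aᶜ` into blocks of `l` entries in decreasing order of magnitude, each block's `ℓ₂` norm
is at most the previous block's `ℓ₁` norm over `√l`; so both the tail `‖h_{Aᶜ}‖₂` and, through
the restricted eigenvalue bounds, the cross term `⟪Φh_A, Φh_{Aᶜ}⟫` are controlled by
`‖h_{T₀ᶜ}‖₁ / √l`. Hence `‖Φh‖² ≥ A₀ U² - A₁ ‖xstar_{T₀ᶜ}‖₁ U / √l`, a quadratic inequality for
`U`, and `‖h‖₂² = U² + ‖h_{Aᶜ}‖₂²` finishes.
-/

open Matrix

section Norms

variable {m N : ℕ}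

lemma l2sq_eq_dotProduct (v : Fin m → ℝ) : l2sq v = v ⬝ᵥ v := by
  simp only [l2sq, dotProduct, sq]

lemma l2sq_nonneg (v : Fin m → ℝ) : 0 ≤ l2sq v :=
  Finset.sum_nonneg fun _ _ => sq_nonneg _

lemma l2sq_pos {v : Fin m → ℝ} (hv : v ≠ 0) : 0 < l2sq v := by
  obtain ⟨i, hi⟩ := Function.ne_iff.mp hv
  have hi' : v i ≠ 0 := hi
  exact (show 0 < v i ^ 2 by positivity).trans_le
    (Finset.single_le_sum (fun j _ => sq_nonneg (v j)) (Finset.mem_univ i))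

lemma l2sq_add (u v : Fin m → ℝ) : l2sq (u + v) = l2sq u + 2 * (u ⬝ᵥ v) + l2sq v := by
  simp only [l2sq_eq_dotProduct, add_dotProduct, dotProduct_add, dotProduct_comm v u]
  ring

lemma l2sq_sub (u v : Fin m → ℝ) : l2sq (u - v) = l2sq u - 2 * (u ⬝ᵥ v) + l2sq v := by
  simp only [l2sq_eq_dotProduct, sub_dotProduct, dotProduct_sub, dotProduct_comm v u]
  ring

lemma l2sq_smul (c : ℝ) (v : Fin m → ℝ) : l2sq (c • v) = c ^ 2 * l2sq v := by
  simp only [l2sq_eq_dotProduct, smul_dotProduct, dotProduct_smul, smul_eq_mul]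
  ring

lemma sq_l2Norm (v : Fin m → ℝ) : l2Norm v ^ 2 = l2sq v :=
  Real.sq_sqrt (l2sq_nonneg v)

lemma l2Norm_nonneg (v : Fin m → ℝ) : 0 ≤ l2Norm v := Real.sqrt_nonneg _

lemma l2Norm_eq_norm (v : Fin m → ℝ) :
    l2Norm v = ‖(WithLp.toLp 2 v : EuclideanSpace ℝ (Fin m))‖ := by
  simp [l2Norm, EuclideanSpace.norm_eq]

lemma l2Norm_eq_zero {v : Fin m → ℝ} : l2Norm v = 0 ↔ v = 0 := by
  rw [l2Norm_eq_norm, norm_eq_zero, WithLp.toLp_eq_zero]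

lemma l2Norm_add_le (u v : Fin m → ℝ) : l2Norm (u + v) ≤ l2Norm u + l2Norm v := by
  simpa only [l2Norm_eq_norm, WithLp.toLp_add] using norm_add_le _ _

lemma l1Norm_nonneg (v : Fin N → ℝ) : 0 ≤ l1Norm v :=
  Finset.sum_nonneg fun _ _ => abs_nonneg _

lemma abs_dotProduct_le_linfNorm_mul_l1Norm (g x : Fin N → ℝ) :
    |g ⬝ᵥ x| ≤ linfNorm g * l1Norm x := by
  have hbdd : BddAbove (Set.range fun j => |g j|) := (Set.finite_range _).bddAbove
  calc |g ⬝ᵥ x| ≤ ∑ i, |g i| * |x i| := by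
        simpa only [dotProduct, abs_mul] using
          Finset.abs_sum_le_sum_abs (fun i => g i * x i) Finset.univ
    _ ≤ ∑ i, linfNorm g * |x i| := by
        gcongr with i
        exact le_ciSup hbdd i
    _ = linfNorm g * l1Norm x := (Finset.mul_sum _ _ _).symm

end Norms

section Restrict

variable {N : ℕ}

lemma restrict_restrict (T : Finset (Fin N)) (h : Fin N → ℝ) :
    restrict T (restrict T h) = restrict T h := by
  funext i; by_cases hi : i ∈ T <;> simp [restrict, hi]

lemma restrict_eq_self_of_subset {A C : Finset (Fin N)} {u : Fin N → ℝ}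
    (hu : restrict A u = u) (hAC : A ⊆ C) : restrict C u = u := by
  rw [← hu]; funext i
  by_cases hiA : i ∈ A
  · simp [restrict, hiA, hAC hiA]
  · simp [restrict, hiA]

lemma restrict_add (T : Finset (Fin N)) (u v : Fin N → ℝ) :
    restrict T (u + v) = restrict T u + restrict T v := by
  funext i; by_cases hi : i ∈ T <;> simp [restrict, hi]

lemma restrict_sub (T : Finset (Fin N)) (u v : Fin N → ℝ) :
    restrict T (u - v) = restrict T u - restrict T v := by
  funext i; by_cases hi : i ∈ T <;> simp [restrict, hi]

lemma restrict_smul (T : Finset (Fin N)) (c : ℝ) (u : Fin N → ℝ) :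
    restrict T (c • u) = c • restrict T u := by
  funext i; by_cases hi : i ∈ T <;> simp [restrict, hi]

lemma restrict_add_restrict_sdiff {S T : Finset (Fin N)} (hTS : T ⊆ S) (h : Fin N → ℝ) :
    restrict T h + restrict (S \ T) h = restrict S h := by
  funext i
  by_cases hiT : i ∈ T
  · simp [restrict, hiT, hTS hiT]
  · by_cases hiS : i ∈ S <;> simp [restrict, hiT, hiS]

lemma restrict_add_restrict_compl (T : Finset (Fin N)) (h : Fin N → ℝ) :
    restrict T h + restrict Tᶜ h = h := by
  funext i; by_cases hi : i ∈ T <;> simp [restrict, hi]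

lemma dotProduct_eq_zero_of_disjoint {A B : Finset (Fin N)} {u v : Fin N → ℝ}
    (hu : restrict A u = u) (hv : restrict B v = v) (hAB : Disjoint A B) : u ⬝ᵥ v = 0 := by
  rw [← hu, ← hv]
  refine Finset.sum_eq_zero fun i _ => ?_
  by_cases hiA : i ∈ A
  · simp [restrict, hiA, Finset.disjoint_left.mp hAB hiA]
  · simp [restrict, hiA]

lemma l2sq_restrict (T : Finset (Fin N)) (h : Fin N → ℝ) :
    l2sq (restrict T h) = ∑ i ∈ T, h i ^ 2 := by
  simp only [l2sq, restrict, ite_pow, ne_eq, OfNat.ofNat_ne_zero, not_false_eq_true,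
    zero_pow, Finset.sum_ite_mem, Finset.univ_inter]

lemma l1Norm_restrict (T : Finset (Fin N)) (h : Fin N → ℝ) :
    l1Norm (restrict T h) = ∑ i ∈ T, |h i| := by
  simp only [l1Norm, restrict, apply_ite, abs_zero, Finset.sum_ite_mem, Finset.univ_inter]

lemma l2sq_eq_add_compl (T : Finset (Fin N)) (h : Fin N → ℝ) :
    l2sq h = l2sq (restrict T h) + l2sq (restrict Tᶜ h) := by
  rw [l2sq_restrict, l2sq_restrict, Finset.sum_add_sum_compl, l2sq]

lemma l1Norm_restrict_add_sdiff {S T : Finset (Fin N)} (hTS : T ⊆ S) (h : Fin N → ℝ) :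
    l1Norm (restrict T h) + l1Norm (restrict (S \ T) h) = l1Norm (restrict S h) := by
  rw [l1Norm_restrict, l1Norm_restrict, l1Norm_restrict, add_comm, Finset.sum_sdiff hTS]

lemma l2Norm_restrict_mono {A C : Finset (Fin N)} (hAC : A ⊆ C) (h : Fin N → ℝ) :
    l2Norm (restrict A h) ≤ l2Norm (restrict C h) := by
  simp only [l2Norm, ← l2sq.eq_def, l2sq_restrict]
  exact Real.sqrt_le_sqrt
    (Finset.sum_le_sum_of_subset_of_nonneg hAC fun i _ _ => sq_nonneg _)

lemma l1Norm_restrict_le_sqrt_card_mul (T : Finset (Fin N)) (h : Fin N → ℝ) :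
    l1Norm (restrict T h) ≤ √T.card * l2Norm (restrict T h) := by
  have hcs : (∑ i ∈ T, |h i|) ^ 2 ≤ T.card * ∑ i ∈ T, h i ^ 2 := by
    simpa [sq_abs] using Finset.sum_mul_sq_le_sq_mul_sq T (fun _ => (1 : ℝ)) (fun i => |h i|)
  rw [l1Norm_restrict, l2Norm, ← l2sq.eq_def, l2sq_restrict, ← Real.sqrt_mul (Nat.cast_nonneg _)]
  exact Real.le_sqrt_of_sq_le hcs

end Restrict

section RestrictedEigenvalues

variable {m N : ℕ}

def restrictedRayleighQuotients (k : ℕ) (Φ : Matrix (Fin m) (Fin N) ℝ) : Set ℝ :=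
  {r | ∃ (T : Finset (Fin N)) (h : Fin N → ℝ), T.card ≤ k ∧ restrict T h ≠ 0 ∧
    r = l2sq (Φ.mulVec (restrict T h)) / l2sq (restrict T h)}

lemma rhoMinus_eq_sInf (k : ℕ) (Φ : Matrix (Fin m) (Fin N) ℝ) :
    rhoMinus k Φ = sInf (restrictedRayleighQuotients k Φ) := rfl

lemma rhoPlus_eq_sSup (k : ℕ) (Φ : Matrix (Fin m) (Fin N) ℝ) :
    rhoPlus k Φ = sSup (restrictedRayleighQuotients k Φ) := rfl

lemma l2sq_mulVec_le (Φ : Matrix (Fin m) (Fin N) ℝ) (v : Fin N → ℝ) :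
    l2sq (Φ *ᵥ v) ≤ (∑ i, ∑ j, Φ i j ^ 2) * l2sq v := by
  rw [l2sq, Finset.sum_mul]
  exact Finset.sum_le_sum fun i _ => Finset.sum_mul_sq_le_sq_mul_sq Finset.univ (Φ i) v

lemma bddBelow_restrictedRayleighQuotients (k : ℕ) (Φ : Matrix (Fin m) (Fin N) ℝ) :
    BddBelow (restrictedRayleighQuotients k Φ) := by
  refine ⟨0, ?_⟩
  rintro _ ⟨T, h, -, -, rfl⟩
  exact div_nonneg (l2sq_nonneg _) (l2sq_nonneg _)

lemma bddAbove_restrictedRayleighQuotients (k : ℕ) (Φ : Matrix (Fin m) (Fin N) ℝ) :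
    BddAbove (restrictedRayleighQuotients k Φ) := by
  refine ⟨∑ i, ∑ j, Φ i j ^ 2, ?_⟩
  rintro _ ⟨T, h, -, hne, rfl⟩
  rw [div_le_iff₀ (l2sq_pos hne)]
  exact l2sq_mulVec_le Φ _

lemma div_mem_restrictedRayleighQuotients {k : ℕ} (Φ : Matrix (Fin m) (Fin N) ℝ)
    {T : Finset (Fin N)} {v : Fin N → ℝ} (hT : T.card ≤ k) (hv : restrict T v = v)
    (hne : v ≠ 0) : l2sq (Φ *ᵥ v) / l2sq v ∈ restrictedRayleighQuotients k Φ :=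
  ⟨T, v, hT, by rwa [hv], by rw [hv]⟩

lemma rhoMinus_mul_le {k : ℕ} (Φ : Matrix (Fin m) (Fin N) ℝ) {T : Finset (Fin N)}
    {v : Fin N → ℝ} (hT : T.card ≤ k) (hv : restrict T v = v) :
    rhoMinus k Φ * l2sq v ≤ l2sq (Φ *ᵥ v) := by
  rcases eq_or_ne v 0 with rfl | hne
  · simp [l2sq]
  rw [← le_div_iff₀ (l2sq_pos hne)]
  exact csInf_le (bddBelow_restrictedRayleighQuotients k Φ)
    (div_mem_restrictedRayleighQuotients Φ hT hv hne)

lemma le_rhoPlus_mul {k : ℕ} (Φ : Matrix (Fin m) (Fin N) ℝ) {T : Finset (Fin N)}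
    {v : Fin N → ℝ} (hT : T.card ≤ k) (hv : restrict T v = v) :
    l2sq (Φ *ᵥ v) ≤ rhoPlus k Φ * l2sq v := by
  rcases eq_or_ne v 0 with rfl | hne
  · simp [l2sq]
  rw [← div_le_iff₀ (l2sq_pos hne)]
  exact le_csSup (bddAbove_restrictedRayleighQuotients k Φ)
    (div_mem_restrictedRayleighQuotients Φ hT hv hne)

-- If no admissible vector exists (`N = 0` or `k = 0`), both sides are `sInf ∅ = sSup ∅ = 0`.
lemma rhoMinus_le_rhoPlus (k : ℕ) (Φ : Matrix (Fin m) (Fin N) ℝ) :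
    rhoMinus k Φ ≤ rhoPlus k Φ := by
  rw [rhoMinus_eq_sInf, rhoPlus_eq_sSup]
  rcases (restrictedRayleighQuotients k Φ).eq_empty_or_nonempty with hempty | hne
  · simp [hempty]
  · exact csInf_le_csSup hne (bddBelow_restrictedRayleighQuotients k Φ)
      (bddAbove_restrictedRayleighQuotients k Φ)

variable {k : ℕ} (Φ : Matrix (Fin m) (Fin N) ℝ) {A B : Finset (Fin N)} {u v : Fin N → ℝ}

-- Polarization: `4⟪Φu, Φv⟫ = ‖Φ(u + v)‖² - ‖Φ(u - v)‖²`, and `u ± v` are both `k`-sparse.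
lemma four_mul_dotProduct_mulVec_le (hu : restrict A u = u) (hv : restrict B v = v)
    (hAB : Disjoint A B) (hk : A.card + B.card ≤ k) :
    4 * (Φ *ᵥ u ⬝ᵥ Φ *ᵥ v) ≤ (rhoPlus k Φ - rhoMinus k Φ) * (l2sq u + l2sq v) := by
  have hcard : (A ∪ B).card ≤ k := (Finset.card_union_le A B).trans hk
  have hu' := restrict_eq_self_of_subset hu (Finset.subset_union_left (s₂ := B))
  have hv' := restrict_eq_self_of_subset hv (Finset.subset_union_right (s₁ := A))
  have hplus := le_rhoPlus_mul Φ hcard (by rw [restrict_add, hu', hv'] : restrict _ (u + v) = _)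
  have hminus := rhoMinus_mul_le Φ hcard (by rw [restrict_sub, hu', hv'] : restrict _ (u - v) = _)
  have huv := dotProduct_eq_zero_of_disjoint hu hv hAB
  rw [mulVec_add, l2sq_add, l2sq_add, huv] at hplus
  rw [mulVec_sub, l2sq_sub, l2sq_sub, huv] at hminus
  linarith

lemma abs_dotProduct_mulVec_le (hu : restrict A u = u) (hv : restrict B v = v)
    (hAB : Disjoint A B) (hk : A.card + B.card ≤ k) :
    |Φ *ᵥ u ⬝ᵥ Φ *ᵥ v| ≤ (rhoPlus k Φ - rhoMinus k Φ) / 2 * (l2Norm u * l2Norm v) := by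
  set a := l2Norm u
  set b := l2Norm v
  rcases (mul_nonneg (l2Norm_nonneg u) (l2Norm_nonneg v)).eq_or_lt with hab | hab
  · rw [← hab, mul_zero]
    rcases mul_eq_zero.mp hab.symm with hu0 | hv0
    · simp [l2Norm_eq_zero.mp hu0]
    · simp [l2Norm_eq_zero.mp hv0]
  -- Rescale to `b • u` and `±a • v`, which have equal norms `a * b`.
  have hscaled : ∀ c : ℝ, c ^ 2 = a ^ 2 →
      4 * (b * c) * (Φ *ᵥ u ⬝ᵥ Φ *ᵥ v) ≤ (rhoPlus k Φ - rhoMinus k Φ) * (2 * (a * b) ^ 2) := by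
    intro c hc
    have := four_mul_dotProduct_mulVec_le Φ (u := b • u) (v := c • v)
      (by rw [restrict_smul, hu]) (by rw [restrict_smul, hv]) hAB hk
    rw [l2sq_smul, l2sq_smul, ← sq_l2Norm u, ← sq_l2Norm v, hc, mulVec_smul, mulVec_smul,
      smul_dotProduct, dotProduct_smul, smul_eq_mul, smul_eq_mul] at this
    linarith
  have hpos := hscaled a rfl
  have hneg := hscaled (-a) (neg_sq a)
  rw [abs_le]
  constructor <;> nlinarith

end RestrictedEigenvalues

section Shelling

variable {N : ℕ}

lemma exists_subset_card_eq_abs_le (h : Fin N → ℝ) {S : Finset (Fin N)} {k : ℕ}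
    (hk : k ≤ S.card) : ∃ T ⊆ S, T.card = k ∧ ∀ i ∈ S \ T, ∀ j ∈ T, |h i| ≤ |h j| := by
  induction k with
  | zero => exact ⟨∅, Finset.empty_subset S, rfl, by simp⟩
  | succ k ih =>
    obtain ⟨T, hTS, hTcard, hTmax⟩ := ih (Nat.le_of_succ_le hk)
    have hne : (S \ T).Nonempty := by
      rw [← Finset.card_pos, Finset.card_sdiff_of_subset hTS]
      omega
    obtain ⟨j, hj, hjmax⟩ := Finset.exists_max_image (S \ T) (fun i => |h i|) hne
    rw [Finset.mem_sdiff] at hj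
    refine ⟨insert j T, Finset.insert_subset hj.1 hTS,
      by rw [Finset.card_insert_of_notMem hj.2, hTcard], fun i hi j' hj' => ?_⟩
    have hiST : i ∈ S \ T := by
      simp only [Finset.mem_sdiff, Finset.mem_insert, not_or] at hi ⊢
      exact ⟨hi.1, hi.2.2⟩
    rcases Finset.mem_insert.mp hj' with rfl | hj'T
    · exact hjmax i hiST
    · exact hTmax i hiST j' hj'T

variable {h : Fin N → ℝ} {l : ℕ}

lemma sqrt_mul_l2Norm_restrict_le_of_card_le {b T : Finset (Fin N)} (hb : b.card ≤ l)
    (hT : T.card = l) (hdom : ∀ i ∈ b, ∀ j ∈ T, |h i| ≤ |h j|) :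
    √l * l2Norm (restrict b h) ≤ l1Norm (restrict T h) := by
  rcases Nat.eq_zero_or_pos l with rfl | hl
  · simpa using l1Norm_nonneg _
  have hj : ∀ j ∈ T, l2Norm (restrict b h) ≤ √l * |h j| := by
    intro j hjT
    rw [l2Norm, ← l2sq.eq_def, l2sq_restrict, ← Real.sqrt_sq_eq_abs,
      ← Real.sqrt_mul (by positivity)]
    refine Real.sqrt_le_sqrt ?_
    calc ∑ i ∈ b, h i ^ 2 ≤ ∑ _i ∈ b, h j ^ 2 :=
          Finset.sum_le_sum fun i hi => sq_le_sq.mpr (by simpa using hdom i hi j hjT)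
      _ = b.card * h j ^ 2 := by rw [Finset.sum_const, nsmul_eq_mul]
      _ ≤ l * h j ^ 2 := by gcongr
  have hsum : √l * (√l * l2Norm (restrict b h)) ≤ √l * l1Norm (restrict T h) := by
    rw [← mul_assoc, Real.mul_self_sqrt (Nat.cast_nonneg l), l1Norm_restrict, Finset.mul_sum]
    simpa [hT] using Finset.sum_le_sum hj
  exact le_of_mul_le_mul_left hsum (by positivity)

/-- Shelling: split `S` into consecutive blocks of the `l` largest remaining entries; each
block is dominated entrywise by the previous one, the first by `T`. -/
theorem sqrt_mul_le_of_shelling (hl : 0 < l) {S₀ : Finset (Fin N)} {g : Finset (Fin N) → ℝ}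
    {c : ℝ} (hc : 0 ≤ c) (hg_sub : ∀ S T, T ⊆ S → g S ≤ g T + g (S \ T))
    (hg_block : ∀ b ⊆ S₀, b.card ≤ l → g b ≤ c * l2Norm (restrict b h)) :
    ∀ S ⊆ S₀, ∀ T : Finset (Fin N), T.card = l → (∀ i ∈ S, ∀ j ∈ T, |h i| ≤ |h j|) →
      √l * g S ≤ c * (l1Norm (restrict T h) + l1Norm (restrict S h)) := by
  intro S
  induction S using Finset.strongInduction with
  | H S ih =>
    intro hS T hT hdom
    have hblock : ∀ b ⊆ S, b.card ≤ l → (∀ i ∈ b, ∀ j ∈ T, |h i| ≤ |h j|) →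
        √l * g b ≤ c * l1Norm (restrict T h) := fun b hbS hb hbT =>
      calc √l * g b ≤ √l * (c * l2Norm (restrict b h)) := by
            gcongr; exact hg_block b (hbS.trans hS) hb
        _ = c * (√l * l2Norm (restrict b h)) := by ring
        _ ≤ c * l1Norm (restrict T h) := by
            gcongr; exact sqrt_mul_l2Norm_restrict_le_of_card_le hb hT hbT
    rcases le_or_gt S.card l with hSl | hSl
    · have := mul_nonneg hc (l1Norm_nonneg (restrict S h))
      linarith [hblock S subset_rfl hSl hdom]
    obtain ⟨T', hT'S, hT'card, hT'max⟩ := exists_subset_card_eq_abs_le h hSl.le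
    have hhead := hblock T' hT'S hT'card.le fun i hi => hdom i (hT'S hi)
    have hrest := ih (S \ T') (Finset.sdiff_ssubset hT'S (by rw [← Finset.card_pos]; omega))
      (Finset.sdiff_subset.trans hS) T' hT'card hT'max
    calc √l * g S ≤ √l * g T' + √l * g (S \ T') := by
          rw [← mul_add]; exact mul_le_mul_of_nonneg_left (hg_sub S T' hT'S) (Real.sqrt_nonneg l)
      _ ≤ c * l1Norm (restrict T h) +
            c * (l1Norm (restrict T' h) + l1Norm (restrict (S \ T') h)) := add_le_add hhead hrest
      _ = c * (l1Norm (restrict T h) + l1Norm (restrict S h)) := by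
          rw [← l1Norm_restrict_add_sdiff hT'S h]; ring

lemma sqrt_mul_l2Norm_restrict_le_add (hl : 0 < l) {S T : Finset (Fin N)}
    (hT : T.card = l) (hdom : ∀ i ∈ S, ∀ j ∈ T, |h i| ≤ |h j|) :
    √l * l2Norm (restrict S h) ≤ l1Norm (restrict T h) + l1Norm (restrict S h) := by
  have hsub : ∀ S T : Finset (Fin N), T ⊆ S →
      l2Norm (restrict S h) ≤ l2Norm (restrict T h) + l2Norm (restrict (S \ T) h) :=
    fun S T hTS => restrict_add_restrict_sdiff hTS h ▸ l2Norm_add_le _ _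
  simpa using sqrt_mul_le_of_shelling hl zero_le_one hsub (fun b _ _ => (one_mul _).ge)
    S subset_rfl T hT hdom

lemma sqrt_mul_abs_dotProduct_mulVec_restrict_le {m k : ℕ} (Φ : Matrix (Fin m) (Fin N) ℝ)
    (hl : 0 < l) {A S T : Finset (Fin N)} {u : Fin N → ℝ} (hu : restrict A u = u)
    (hAS : Disjoint A S) (hk : A.card + l ≤ k) (hT : T.card = l)
    (hdom : ∀ i ∈ S, ∀ j ∈ T, |h i| ≤ |h j|) :
    √l * |Φ *ᵥ u ⬝ᵥ Φ *ᵥ restrict S h| ≤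
      (rhoPlus k Φ - rhoMinus k Φ) / 2 * l2Norm u *
        (l1Norm (restrict T h) + l1Norm (restrict S h)) := by
  have hc : 0 ≤ (rhoPlus k Φ - rhoMinus k Φ) / 2 * l2Norm u :=
    mul_nonneg (by linarith [rhoMinus_le_rhoPlus k Φ]) (l2Norm_nonneg u)
  refine sqrt_mul_le_of_shelling (g := fun S => |Φ *ᵥ u ⬝ᵥ Φ *ᵥ restrict S h|) hl hc
    (fun S T hTS => ?_) (fun b hbS hb => ?_) S subset_rfl T hT hdom
  · rw [← restrict_add_restrict_sdiff hTS h, mulVec_add, dotProduct_add]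
    exact abs_add_le _ _
  · rw [mul_assoc]
    exact abs_dotProduct_mulVec_le Φ hu (restrict_restrict b h)
      (Finset.disjoint_of_subset_right hbS hAS) (by omega)

end Shelling

section Lasso

variable {m N : ℕ}

lemma l1Norm_eq_add_compl (T : Finset (Fin N)) (x : Fin N → ℝ) :
    l1Norm x = l1Norm (restrict T x) + l1Norm (restrict Tᶜ x) := by
  rw [l1Norm_restrict, l1Norm_restrict, Finset.sum_add_sum_compl, l1Norm]

lemma l1Norm_sub_l1Norm_le (x y : Fin N → ℝ) (T : Finset (Fin N)) :
    l1Norm x - l1Norm y ≤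
      l1Norm (restrict T (y - x)) - l1Norm (restrict Tᶜ (y - x)) + 2 * l1Norm (restrict Tᶜ x) := by
  rw [l1Norm_eq_add_compl T x, l1Norm_eq_add_compl T y]
  simp only [l1Norm_restrict, Pi.sub_apply]
  have hT : ∑ i ∈ T, |x i| - ∑ i ∈ T, |y i| ≤ ∑ i ∈ T, |y i - x i| := by
    rw [← Finset.sum_sub_distrib]
    exact Finset.sum_le_sum fun i _ => by rw [abs_sub_comm]; exact abs_sub_abs_le_abs_sub _ _
  have hTc : ∑ i ∈ Tᶜ, |x i| - ∑ i ∈ Tᶜ, |y i| ≤ ∑ i ∈ Tᶜ, (2 * |x i| - |y i - x i|) := by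
    rw [← Finset.sum_sub_distrib]
    exact Finset.sum_le_sum fun i _ => by linarith [abs_sub (y i) (x i)]
  rw [Finset.sum_sub_distrib, ← Finset.mul_sum] at hTc
  linarith

lemma l2sq_mulVec_add_le_of_lassoObj_le (Φ : Matrix (Fin m) (Fin N) ℝ) (y : Fin m → ℝ)
    {lam Δ : ℝ} (hlamΔ : 0 ≤ lam * Δ) {xhat xstar : Fin N → ℝ}
    (hobj : lassoObj Φ y lam Δ xhat ≤ lassoObj Φ y lam Δ xstar)
    (hdual : linfNorm (Φᵀ *ᵥ (Φ *ᵥ xstar - y)) ≤ lam * Δ / 2) (T : Finset (Fin N)) :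
    l2sq (Φ *ᵥ (xhat - xstar)) + lam * Δ * l1Norm (restrict Tᶜ (xhat - xstar)) ≤
      3 * (lam * Δ) * l1Norm (restrict T (xhat - xstar)) +
        4 * (lam * Δ) * l1Norm (restrict Tᶜ xstar) := by
  set h := xhat - xstar
  set w := Φ *ᵥ xstar - y
  have hres : Φ *ᵥ xhat - y = w + Φ *ᵥ h := by
    simp only [w, h, mulVec_sub]; abel
  have hcorr : -(w ⬝ᵥ Φ *ᵥ h) ≤ lam * Δ / 2 * l1Norm h := by
    rw [dotProduct_mulVec, ← mulVec_transpose]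
    exact (neg_le_abs _).trans ((abs_dotProduct_le_linfNorm_mul_l1Norm _ _).trans
      (mul_le_mul_of_nonneg_right hdual (l1Norm_nonneg h)))
  have hl1 := mul_le_mul_of_nonneg_left (l1Norm_sub_l1Norm_le xstar xhat T) hlamΔ
  rw [l1Norm_eq_add_compl T h] at hcorr
  unfold lassoObj at hobj
  rw [hres, l2sq_add] at hobj
  linarith

lemma rhoMinus_mul_sub_le_l2sq_mulVec (Φ : Matrix (Fin m) (Fin N) ℝ) {k : ℕ}
    {A : Finset (Fin N)} (hA : A.card ≤ k) (h : Fin N → ℝ) :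
    rhoMinus k Φ * l2sq (restrict A h) - 2 * |Φ *ᵥ restrict A h ⬝ᵥ Φ *ᵥ restrict Aᶜ h| ≤
      l2sq (Φ *ᵥ h) := by
  conv_rhs => rw [← restrict_add_restrict_compl A h, mulVec_add, l2sq_add]
  linarith [rhoMinus_mul_le Φ hA (restrict_restrict A h), l2sq_nonneg (Φ *ᵥ restrict Aᶜ h),
    neg_abs_le (Φ *ᵥ restrict A h ⬝ᵥ Φ *ᵥ restrict Aᶜ h)]

end Lasso

section Estimates

lemma le_div_add_sqrt_div_of_mul_sq_le {A B C x : ℝ} (hA : 0 < A) (hB : 0 ≤ B) (hC : 0 ≤ C)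
    (h : A * x ^ 2 ≤ B * x + C) : x ≤ B / A + √(C / A) := by
  set r := √(C / A)
  have hr : 0 ≤ r := Real.sqrt_nonneg _
  have hAr : A * r ^ 2 = C := by rw [Real.sq_sqrt (by positivity)]; field_simp
  rcases le_or_gt x r with hxr | hxr
  · linarith [div_nonneg hB hA.le]
  have hfac : A * (x - r) * (x + r) ≤ B * (x + r) := by nlinarith
  have hxr' : x - r ≤ B / A := by
    rw [le_div_iff₀ hA, mul_comm]
    exact le_of_mul_le_mul_right hfac (by linarith)
  linarith

lemma le_sqrt_mul_add_of_sq_eq_add_sq {s l : ℕ} (hl : 0 < l) {n U τ ρ : ℝ} (hU : 0 ≤ U)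
    (hτ : 0 ≤ τ) (hρ : 0 ≤ ρ) (hsq : n ^ 2 = U ^ 2 + τ ^ 2)
    (hτle : √l * τ ≤ 3 * √s * U + 4 * ρ) :
    n ≤ √(1 + 9 * (s : ℝ) / l) * U + 4 * ρ / √l := by
  have hsl : 0 < √(l : ℝ) := Real.sqrt_pos.mpr (by exact_mod_cast hl)
  set K := √(1 + 9 * (s : ℝ) / l)
  set b := 3 * √s / √l
  set c := 4 * ρ / √l
  have hτb : τ ≤ b * U + c :=
    calc τ ≤ (3 * √s * U + 4 * ρ) / √l := by rwa [le_div_iff₀' hsl]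
      _ = b * U + c := by ring
  have hb2 : b ^ 2 = 9 * (s : ℝ) / l := by
    simp only [b, div_pow, mul_pow, Real.sq_sqrt (Nat.cast_nonneg _)]; norm_num
  have hbK : b ≤ K := Real.le_sqrt_of_sq_le (by rw [hb2]; linarith)
  have hK2 : K ^ 2 = 1 + b ^ 2 := by rw [hb2]; exact Real.sq_sqrt (by positivity)
  have hb : 0 ≤ b := by positivity
  have hc : 0 ≤ c := by positivity
  refine le_of_sq_le_sq ?_ (by positivity)
  nlinarith [mul_le_mul_of_nonneg_right hbK (mul_nonneg hU hc)]

end Estimates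

section Constants

variable {m N : ℕ} {Φ : Matrix (Fin m) (Fin N) ℝ} {s l : ℕ}

lemma A1_nonneg : 0 ≤ A1 s l Φ := by
  unfold A1; linarith [rhoMinus_le_rhoPlus (s + 2 * l) Φ]

lemma A0_mul_sq_le (hl : 0 < l) {a ρ U Z X P : ℝ} (hU : 0 ≤ U)
    (hZ : Z ≤ 3 * √s * U + 4 * ρ) (hP : P ≤ 3 * a * √s * U + 4 * a * ρ)
    (hlow : rhoMinus (s + l) Φ * U ^ 2 - 2 * X ≤ P)
    (hX : √l * X ≤ (rhoPlus (s + 2 * l) Φ - rhoMinus (s + 2 * l) Φ) / 2 * U * Z) :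
    A0 s l Φ * U ^ 2 ≤ (3 * a * √s + A1 s l Φ * ρ / √l) * U + 4 * a * ρ := by
  have hsl : 0 < √(l : ℝ) := Real.sqrt_pos.mpr (by exact_mod_cast hl)
  set δ := rhoPlus (s + 2 * l) Φ - rhoMinus (s + 2 * l) Φ
  have hδU : 0 ≤ δ * U := mul_nonneg (by linarith [rhoMinus_le_rhoPlus (s + 2 * l) Φ]) hU
  have h2X : 2 * X ≤ δ * U * (3 * √s * U + 4 * ρ) / √l := by
    rw [le_div_iff₀ hsl]
    nlinarith [mul_le_mul_of_nonneg_left hZ hδU]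
  have hexpand : δ * U * (3 * √s * U + 4 * ρ) / √l =
      3 * (√s / √l) * δ * U ^ 2 + 4 * δ * ρ / √l * U := by ring
  rw [A0, A1, Real.sqrt_div' _ (Nat.cast_nonneg _)]
  linarith

lemma le_errorBound_of_A0_mul_sq_le (hl : 0 < l) (hA0 : 0 < A0 s l Φ) {a ρ U n : ℝ}
    (ha : 0 ≤ a) (hρ : 0 ≤ ρ)
    (hquad : A0 s l Φ * U ^ 2 ≤ (3 * a * √s + A1 s l Φ * ρ / √l) * U + 4 * a * ρ)
    (hn : n ≤ √(1 + 9 * (s : ℝ) / l) * U + 4 * ρ / √l) :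
    n ≤ 6 * C2 s l Φ ^ 2 * √s * a / √(1 + 9 * (s : ℝ) / l) + C1 s l Φ / √l * ρ +
      2.5 * C2 s l Φ * √(a * ρ) := by
  have hl' : (0 : ℝ) < l := by exact_mod_cast hl
  have hU := le_div_add_sqrt_div_of_mul_sq_le hA0
    (add_nonneg (by positivity) (div_nonneg (mul_nonneg A1_nonneg hρ) (Real.sqrt_nonneg _)))
    (by positivity) hquad
  set K := √(1 + 9 * (s : ℝ) / l)
  have hK0 : 0 < K := Real.sqrt_pos.mpr (by positivity)
  have hK2 : K ^ 2 = 1 + 9 * (s : ℝ) / l := Real.sq_sqrt (by positivity)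
  have hC2 : C2 s l Φ ^ 2 = K ^ 2 / A0 s l Φ := by
    rw [hK2, C2, Real.sq_sqrt (div_nonneg (by positivity) hA0.le)]
  have hhead : K * (3 * a * √s / A0 s l Φ) ≤ 6 * C2 s l Φ ^ 2 * √s * a / K := by
    have hnn : 0 ≤ K * (3 * a * √s / A0 s l Φ) := by positivity
    have : 6 * C2 s l Φ ^ 2 * √s * a / K = 2 * (K * (3 * a * √s / A0 s l Φ)) := by
      rw [hC2]; field_simp; ring
    linarith
  have htail : K * (A1 s l Φ * ρ / √l / A0 s l Φ) + 4 * ρ / √l = C1 s l Φ / √l * ρ := by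
    have hC1 : C1 s l Φ = 4 + K * A1 s l Φ / A0 s l Φ := rfl
    rw [hC1]; field_simp; ring
  have hroot : K * √(4 * a * ρ / A0 s l Φ) = 2 * C2 s l Φ * √(a * ρ) :=
    calc K * √(4 * a * ρ / A0 s l Φ) = √(K ^ 2 * (4 * a * ρ / A0 s l Φ)) := by
          rw [Real.sqrt_mul (sq_nonneg K), Real.sqrt_sq hK0.le]
      _ = √(2 ^ 2 * (K ^ 2 / A0 s l Φ) * (a * ρ)) := by ring_nf
      _ = 2 * C2 s l Φ * √(a * ρ) := by
          rw [← hC2, Real.sqrt_mul (by positivity), Real.sqrt_mul (by positivity),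
            Real.sqrt_sq (by norm_num), Real.sqrt_sq (show 0 ≤ C2 s l Φ from Real.sqrt_nonneg _)]
  have hsplit : K * ((3 * a * √s + A1 s l Φ * ρ / √l) / A0 s l Φ + √(4 * a * ρ / A0 s l Φ)) +
      4 * ρ / √l = K * (3 * a * √s / A0 s l Φ) +
        (K * (A1 s l Φ * ρ / √l / A0 s l Φ) + 4 * ρ / √l) + K * √(4 * a * ρ / A0 s l Φ) := by
    ring
  have hC2nn : 0 ≤ C2 s l Φ * √(a * ρ) := mul_nonneg (Real.sqrt_nonneg _) (Real.sqrt_nonneg _)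
  nlinarith [mul_le_mul_of_nonneg_left hU hK0.le]

end Constants

theorem stmt14_general {Mt Mb N : ℕ} (Φt : Matrix (Fin Mt) (Fin N) ℝ) (yt : Fin Mt → ℝ)
    (Φb : Matrix (Fin Mb) (Fin N) ℝ) (yb : Fin Mb → ℝ)
    (lam Δ : ℝ) (hlam : 0 < lam) (hΔ : 0 < Δ)
    (xhat xstar : Fin N → ℝ)
    (hxstarF : xstar ∈ feasible Φt yt Φb yb Δ)
    (hopt : ∀ x ∈ feasible Φt yt Φb yb Δ, lassoObj Φt yt lam Δ xhat ≤ lassoObj Φt yt lam Δ x)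
    (hdual : linfNorm (Φt.transpose.mulVec (Φt.mulVec xstar - yt)) ≤ lam * Δ / 2)
    (s l : ℕ) (hl : 1 ≤ l)
    (T₀ T₁ : Finset (Fin N)) (hT₀ : T₀.card = s)
    (hT₁sub : T₁ ⊆ T₀ᶜ) (hT₁card : T₁.card = l)
    (hlargest : ∀ i ∈ T₀ᶜ \ T₁, ∀ i' ∈ T₁, |(xhat - xstar) i| ≤ |(xhat - xstar) i'|)
    (hA0 : 0 < A0 s l Φt) :
    l2Norm (xhat - xstar) ≤
      6 * C2 s l Φt ^ 2 * Real.sqrt s * lam * Δ / Real.sqrt (1 + 9 * (s : ℝ) / l) +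
        (C1 s l Φt / Real.sqrt l) * l1Norm (restrict T₀ᶜ xstar) +
        2.5 * C2 s l Φt * Real.sqrt (lam * Δ * l1Norm (restrict T₀ᶜ xstar)) := by
  set h := xhat - xstar
  set A := T₀ ∪ T₁
  set U := l2Norm (restrict A h)
  set Z := l1Norm (restrict T₀ᶜ h)
  set ρ := l1Norm (restrict T₀ᶜ xstar)
  have ha : 0 < lam * Δ := mul_pos hlam hΔ
  have hAc : Aᶜ = T₀ᶜ \ T₁ := by ext; simp [A]
  rw [← hAc] at hlargest
  have hAcard : A.card ≤ s + l := hT₀ ▸ hT₁card ▸ Finset.card_union_le T₀ T₁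
  have hZ : l1Norm (restrict T₁ h) + l1Norm (restrict Aᶜ h) = Z :=
    hAc ▸ l1Norm_restrict_add_sdiff hT₁sub h
  have hcone := l2sq_mulVec_add_le_of_lassoObj_le Φt yt ha.le (hopt xstar hxstarF) hdual T₀
  have hhead : l1Norm (restrict T₀ h) ≤ √s * U := hT₀ ▸
    (l1Norm_restrict_le_sqrt_card_mul T₀ h).trans
      (by gcongr; exact l2Norm_restrict_mono Finset.subset_union_left h)
  have hZle : Z ≤ 3 * √s * U + 4 * ρ := le_of_mul_le_mul_left (by
    nlinarith [l2sq_nonneg (Φt *ᵥ h), mul_le_mul_of_nonneg_left hhead ha.le]) ha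
  have htail := sqrt_mul_l2Norm_restrict_le_add hl hT₁card hlargest
  have hcross := sqrt_mul_abs_dotProduct_mulVec_restrict_le Φt hl (restrict_restrict A h)
    disjoint_compl_right (by omega : A.card + l ≤ s + 2 * l) hT₁card hlargest
  have hquad := A0_mul_sq_le (Φ := Φt) (a := lam * Δ) hl (l2Norm_nonneg _) hZle
    (by nlinarith [l1Norm_nonneg (restrict T₀ᶜ h), mul_le_mul_of_nonneg_left hhead ha.le])
    ((rhoMinus_mul_sub_le_l2sq_mulVec Φt hAcard h).trans_eq' (by rw [sq_l2Norm]))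
    (hZ ▸ hcross)
  have hnorm := le_sqrt_mul_add_of_sq_eq_add_sq (s := s) (n := l2Norm h) hl (l2Norm_nonneg _)
    (l2Norm_nonneg _) (l1Norm_nonneg _)
    (by simp only [sq_l2Norm]; exact l2sq_eq_add_compl A h)
    ((hZ ▸ htail).trans hZle)
  exact (le_errorBound_of_A0_mul_sq_le hl hA0 ha.le (l1Norm_nonneg _) hquad hnorm).trans_eq
    (by ring)

theorem stmt14 {Mt Mb N : ℕ} (Φt : Matrix (Fin Mt) (Fin N) ℝ) (yt : Fin Mt → ℝ)
    (Φb : Matrix (Fin Mb) (Fin N) ℝ) (yb : Fin Mb → ℝ)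
    (lam Δ : ℝ) (hlam : 0 < lam) (hΔ : 0 < Δ)
    (xhat xstar : Fin N → ℝ)
    (hxstarF : xstar ∈ feasible Φt yt Φb yb Δ)
    (hxhatF : xhat ∈ feasible Φt yt Φb yb Δ)
    (hopt : ∀ x ∈ feasible Φt yt Φb yb Δ, lassoObj Φt yt lam Δ xhat ≤ lassoObj Φt yt lam Δ x)
    (hdual : linfNorm (Φt.transpose.mulVec (Φt.mulVec xstar - yt)) ≤ lam * Δ / 2)
    (s l : ℕ) (hs : 1 ≤ s) (hl : 1 ≤ l)
    (T₀ T₁ : Finset (Fin N)) (hT₀ : T₀.card = s)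
    (hT₁sub : T₁ ⊆ T₀ᶜ) (hT₁card : T₁.card = l)
    (hlargest : ∀ i ∈ T₀ᶜ \ T₁, ∀ i' ∈ T₁, |(xhat - xstar) i| ≤ |(xhat - xstar) i'|)
    (hA0 : 0 < A0 s l Φt) :
    l2Norm (xhat - xstar) ≤
      6 * C2 s l Φt ^ 2 * Real.sqrt s * lam * Δ / Real.sqrt (1 + 9 * (s : ℝ) / l) +
        (C1 s l Φt / Real.sqrt l) * l1Norm (restrict T₀ᶜ xstar) +
        2.5 * C2 s l Φt * Real.sqrt (lam * Δ * l1Norm (restrict T₀ᶜ xstar)) :=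
  stmt14_general Φt yt Φb yb lam Δ hlam hΔ xhat xstar hxstarF hopt hdual s l hl T₀ T₁ hT₀ hT₁sub
    hT₁card hlargest hA0
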